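/- Let U be a nonprincipal ultrafilter on ℕ and let f : ℕ → ℕ satisfy f(n) ≥ n for all n. Then the family G_f = {X ⊆ ℕ : X is infinite and f <_U ν_X} is groupwise dense, where f <_U ν_X means {n : f(n) < ν_X(n)} ∈ U. -/

import Mathlib

open Cardinal Set Filter

/-- A nonprincipal ultrafilter on ℕ: one that is not of the form `pure n`. -/
def Nonprincipal (U : Ultrafilter ℕ) : Prop := ∀ n : ℕ, U ≠ pure n

/-- `C` is cofinal in the ultrapower `U-prod ω` with respect to `≤_U`. -/
def UCofinal (U : Ultrafilter ℕ) (C : Set (ℕ → ℕ)) : Prop :=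
  ∀ f : ℕ → ℕ, ∃ g ∈ C, {n : ℕ | f n ≤ g n} ∈ U

/-- The cofinality of the ultrapower `U-prod ω`: the least cardinality of a
set of functions cofinal with respect to `≤_U`. -/
noncomputable def cfUProd (U : Ultrafilter ℕ) : Cardinal :=
  sInf {c : Cardinal | ∃ C : Set (ℕ → ℕ), UCofinal U C ∧ c = #C}

/-- The bounding number 𝔟. -/
noncomputable def boundingNumber : Cardinal :=
  sInf {c : Cardinal | ∃ B : Set (ℕ → ℕ),
    (∀ f : ℕ → ℕ, ∃ g ∈ B, {n : ℕ | f n ≤ g n}.Infinite) ∧ c = #B}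

/-- The dominating number 𝔡. -/
noncomputable def dominatingNumber : Cardinal :=
  sInf {c : Cardinal | ∃ D : Set (ℕ → ℕ),
    (∀ f : ℕ → ℕ, ∃ g ∈ D, {n : ℕ | ¬ f n ≤ g n}.Finite) ∧ c = #D}

/-- The splitting number 𝔰. -/
noncomputable def splittingNumber : Cardinal :=
  sInf {c : Cardinal | ∃ S : Set (Set ℕ),
    (∀ X : Set ℕ, X.Infinite → ∃ Y ∈ S, (X ∩ Y).Infinite ∧ (X \ Y).Infinite) ∧ c = #S}

/-- A family of infinite subsets of ℕ is groupwise dense if it is closed under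
infinite subsets and finite modifications and, for every partition of ℕ into
consecutive finite intervals (given by a strictly increasing sequence starting
at 0), the union of some infinitely many of the intervals is in the family. -/
def GroupwiseDense (G : Set (Set ℕ)) : Prop :=
  (∀ X ∈ G, X.Infinite) ∧
  (∀ X ∈ G, ∀ Y : Set ℕ, Y ⊆ X → Y.Infinite → Y ∈ G) ∧
  (∀ X ∈ G, ∀ Y : Set ℕ, (symmDiff X Y).Finite → Y ∈ G) ∧
  (∀ a : ℕ → ℕ, a 0 = 0 → StrictMono a →
    ∃ K : Set ℕ, K.Infinite ∧ (⋃ k ∈ K, Set.Ico (a k) (a (k + 1))) ∈ G)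

/-- The groupwise density number 𝔤. -/
noncomputable def groupwiseDensityNumber : Cardinal :=
  sInf {c : Cardinal | ∃ 𝒢 : Set (Set (Set ℕ)),
    (∀ G ∈ 𝒢, GroupwiseDense G) ∧ ⋂₀ 𝒢 = ∅ ∧ c = #𝒢}

/-- `U` is a pseudo-P_κ point. -/
def PseudoPPoint (U : Ultrafilter ℕ) (κ : Cardinal) : Prop :=
  ∀ F : Set (Set ℕ), (∀ A ∈ F, A ∈ U) → #F < κ →
    ∃ A : Set ℕ, A.Infinite ∧ ∀ B ∈ F, (A \ B).Finite

/-- A finite-to-one function on ℕ. -/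
def FinToOne (f : ℕ → ℕ) : Prop := ∀ n : ℕ, (f ⁻¹' {n}).Finite

/-- Two ultrafilters are nearly coherent if they have a common image under
finite-to-one maps. -/
def NearlyCoherent (U U' : Ultrafilter ℕ) : Prop :=
  ∃ f f' : ℕ → ℕ, FinToOne f ∧ FinToOne f' ∧
    Ultrafilter.map f U = Ultrafilter.map f' U'

/-- `nuX X n` is the least element of `X` greater than `n`. -/
noncomputable def nuX (X : Set ℕ) (n : ℕ) : ℕ := sInf {m : ℕ | m ∈ X ∧ n < m}

/-! If `Y \ X` is finite then `ν_X ≤ ν_Y` from some point on, and a nonprincipal ultrafilter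
contains every cofinite set; this gives closure under infinite subsets and finite modifications.
Given an interval partition, coarsen it to blocks `[c j, c (j + 1))` such that `f` maps `[0, c j)`
below `c (j + 1)`, so `f n < c (j + 2)` for `n` in block `j`. Pick the residue `r` mod 3 for which
the `n` lying in a block `j` with `j + 2 ≡ r` form a set in `U`, and keep the blocks of index
`≡ r`: after such an `n` the next kept point lies in a block of index at least `j + 2`. -/

lemma nuX_spec {X : Set ℕ} (hX : X.Infinite) (n : ℕ) : nuX X n ∈ X ∧ n < nuX X n :=
  Nat.sInf_mem (hX.exists_gt n)

lemma nuX_le {X : Set ℕ} {n m : ℕ} (hm : m ∈ X) (hnm : n < m) : nuX X n ≤ m :=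
  Nat.sInf_le ⟨hm, hnm⟩

lemma Nonprincipal.le_cofinite {U : Ultrafilter ℕ} (hU : Nonprincipal U) :
    (U : Filter ℕ) ≤ cofinite :=
  U.le_cofinite_or_eq_pure.resolve_right fun ⟨a, ha⟩ => hU a ha

lemma eventually_nuX_le_of_diff_finite {X Y : Set ℕ} (hY : Y.Infinite) (hYX : (Y \ X).Finite) :
    ∀ᶠ n in cofinite, nuX X n ≤ nuX Y n := by
  obtain ⟨N, hN⟩ := hYX.bddAbove
  rw [Nat.cofinite_eq_atTop]
  filter_upwards [eventually_ge_atTop N] with n hn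
  obtain ⟨hmY, hnm⟩ := nuX_spec hY n
  have hmX : nuX Y n ∈ X := by
    by_contra hmX
    have := hN ⟨hmY, hmX⟩
    omega
  exact nuX_le hmX hnm

lemma eventually_lt_nuX_of_diff_finite {U : Ultrafilter ℕ} (hU : (U : Filter ℕ) ≤ cofinite)
    {f : ℕ → ℕ} {X Y : Set ℕ} (hX : ∀ᶠ n in U, f n < nuX X n) (hY : Y.Infinite)
    (hYX : (Y \ X).Finite) : ∀ᶠ n in U, f n < nuX Y n := by
  filter_upwards [hX, hU (eventually_nuX_le_of_diff_finite hY hYX)] with n hfX hXY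
  exact hfX.trans_le hXY

lemma StrictMono.exists_mem_Ico {c : ℕ → ℕ} (hc : StrictMono c) (hc0 : c 0 = 0) (n : ℕ) :
    ∃ j, n ∈ Ico (c j) (c (j + 1)) := by
  have hex : ∃ j, n < c (j + 1) := ⟨n, n.lt_succ_self.trans_le hc.le_apply⟩
  refine ⟨Nat.find hex, ?_, Nat.find_spec hex⟩
  rcases h : Nat.find hex with _ | j
  · simp [hc0]
  · exact not_lt.1 (Nat.find_min hex (h ▸ j.lt_succ_self))

lemma StrictMono.exists_strictMono_forall_lt (f : ℕ → ℕ) {a : ℕ → ℕ} (ha : StrictMono a) :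
    ∃ b : ℕ → ℕ, StrictMono b ∧ b 0 = 0 ∧ ∀ j, ∀ n < a (b j), f n < a (b (j + 1)) := by
  have step : ∀ m, ∃ m', m < m' ∧ ∀ n < a m, f n < a m' := fun m =>
    ⟨max (m + 1) ((Finset.range (a m)).sup f + 1), by omega, fun n hn =>
      calc f n ≤ (Finset.range (a m)).sup f := Finset.le_sup (Finset.mem_range.2 hn)
        _ < max (m + 1) ((Finset.range (a m)).sup f + 1) := by omega
        _ ≤ a _ := ha.le_apply⟩
  choose g hg_lt hg using step
  refine ⟨fun j => g^[j] 0, strictMono_nat_of_lt_succ fun j => ?_, rfl, fun j n hn => ?_⟩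
  · simpa only [Function.iterate_succ_apply'] using hg_lt _
  · simpa only [Function.iterate_succ_apply'] using hg _ n hn

lemma Ultrafilter.exists_mod_eq_mem (U : Ultrafilter ℕ) (g : ℕ → ℕ) {m : ℕ} (hm : 0 < m) :
    ∃ r < m, ∀ᶠ n in U, g n % m = r := by
  obtain ⟨r, hr, hUr⟩ := (U.map fun n => g n % m).eq_pure_of_finite_mem (finite_Iio m)
    (Ultrafilter.mem_map.2 (univ_mem' fun n => Nat.mod_lt (g n) hm))
  have hr_mem : {r} ∈ U.map fun n => g n % m := by
    rw [hUr]
    exact mem_singleton r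
  exact ⟨r, hr, Ultrafilter.mem_map.1 hr_mem⟩

lemma lt_nuX_of_subset_iUnion_Ico {c f : ℕ → ℕ} (hc : StrictMono c)
    (hf : ∀ j, ∀ n < c j, f n < c (j + 1)) {Y : Set ℕ} (hY : Y.Infinite) {r : ℕ}
    (hYc : Y ⊆ ⋃ i ∈ {i | i % 3 = r}, Ico (c i) (c (i + 1))) {j n : ℕ}
    (hn : n ∈ Ico (c j) (c (j + 1))) (hj : (j + 2) % 3 = r) : f n < nuX Y n := by
  obtain ⟨hmY, hnm⟩ := nuX_spec hY n
  obtain ⟨i, hci, hi, hmi⟩ : ∃ i, c i ≤ nuX Y n ∧ i % 3 = r ∧ nuX Y n < c (i + 1) := by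
    simpa using hYc hmY
  have hji : j < i + 1 := hc.lt_iff_lt.1 (hn.1.trans_lt (hnm.trans hmi))
  calc f n < c (j + 1 + 1) := hf _ _ hn.2
    _ ≤ c i := hc.monotone (by omega)
    _ ≤ nuX Y n := hci

lemma exists_iUnion_Ico_eventually_lt_nuX (U : Ultrafilter ℕ) (f : ℕ → ℕ) {a : ℕ → ℕ}
    (ha0 : a 0 = 0) (ha : StrictMono a) :
    ∃ K : Set ℕ, K.Infinite ∧ (⋃ k ∈ K, Ico (a k) (a (k + 1))).Infinite ∧
      ∀ᶠ n in U, f n < nuX (⋃ k ∈ K, Ico (a k) (a (k + 1))) n := by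
  obtain ⟨b, hb, hb0, hab⟩ := ha.exists_strictMono_forall_lt f
  have hc : StrictMono (a ∘ b) := ha.comp hb
  choose idx hidx using hc.exists_mem_Ico (by simp [hb0, ha0])
  obtain ⟨r, hr, hUr⟩ := U.exists_mod_eq_mem (fun n => idx n + 2) three_pos
  set J := {j | j % 3 = r}
  have hJ : J.Infinite := Nat.frequently_atTop_iff_infinite.1 (Nat.frequently_mod_eq hr)
  set K := ⋃ j ∈ J, Ico (b j) (b (j + 1))
  set Y := ⋃ k ∈ K, Ico (a k) (a (k + 1))
  have hbK : ∀ j ∈ J, b j ∈ K := fun j hj =>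
    mem_biUnion hj ⟨le_rfl, hb j.lt_succ_self⟩
  have habY : ∀ j ∈ J, a (b j) ∈ Y := fun j hj =>
    mem_biUnion (hbK j hj) ⟨le_rfl, ha (b j).lt_succ_self⟩
  have hYc : Y ⊆ ⋃ j ∈ J, Ico (a (b j)) (a (b (j + 1))) := by
    simp only [Y, K, subset_def, mem_iUnion]
    rintro m ⟨k, ⟨j, hj, hbk, hkb⟩, hm⟩
    exact ⟨j, hj, Ico_subset_Ico (ha.monotone hbk) (ha.monotone hkb) hm⟩
  have hY : Y.Infinite := (hJ.image hc.injective.injOn).mono (image_subset_iff.2 habY)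
  refine ⟨K, (hJ.image hb.injective.injOn).mono (image_subset_iff.2 hbK), hY, ?_⟩
  filter_upwards [hUr] with n hn
  exact lt_nuX_of_subset_iUnion_Ico hc hab hY hYc (hidx n) hn

theorem stmt_7_general (U : Ultrafilter ℕ) (hU : Nonprincipal U) (f : ℕ → ℕ) :
    GroupwiseDense {X : Set ℕ | X.Infinite ∧ {n : ℕ | f n < nuX X n} ∈ U} := by
  have hUc := hU.le_cofinite
  refine ⟨fun X hX => hX.1, fun X hX Y hYX hY => ?_, fun X hX Y hXY => ?_, fun a ha0 ha => ?_⟩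
  · exact ⟨hY, eventually_lt_nuX_of_diff_finite hUc hX.2 hY
      (by rw [sdiff_eq_empty.2 hYX]; exact finite_empty)⟩
  · have hY : Y.Infinite := fun hYfin =>
      hX.1 ((hXY.union hYfin).subset (le_symmDiff_sup_right X Y))
    exact ⟨hY, eventually_lt_nuX_of_diff_finite hUc hX.2 hY
      (hXY.subset fun _ hx => Or.inr hx)⟩
  · exact exists_iUnion_Ico_eventually_lt_nuX U f ha0 ha

/-- For a nonprincipal ultrafilter U and f with f(n) ≥ n for all n, the family
G_f = {X : X infinite and f <_U ν_X} is groupwise dense. -/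
theorem stmt_7 (U : Ultrafilter ℕ) (hU : Nonprincipal U) (f : ℕ → ℕ)
    (hf : ∀ n : ℕ, n ≤ f n) :
    GroupwiseDense {X : Set ℕ | X.Infinite ∧ {n : ℕ | f n < nuX X n} ∈ U} :=
  stmt_7_general U hU f
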